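/- arXiv:2301.10261 — 3 statements merged into one kernel-verified Lean document; each statement's English description precedes it below -/
import Mathlib

section
/- For a full matrix algebra M_d(ℂ) with d ≥ 2, any quantum channel (completely positive trace-preserving map) E : M_d(ℂ) → M_d(ℂ) ⊗ M_n(ℂ) satisfying Tr_C ∘ E = id_{M_d(ℂ)} (a non-disturbing measurement, i.e., a leak) must factorize as E(ρ) = ρ ⊗ χ for a fixed density operator χ independent of ρ. -/
open Matrix Kronecker BigOperators
open scoped ComplexOrder

noncomputable section

/-- Partial trace over the second tensor factor. -/
def ptr2 {α β : Type*} [Fintype β] (M : Matrix (α × β) (α × β) ℂ) :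
    Matrix α α ℂ := fun i j => ∑ k, M (i, k) (j, k)

/-- Partial trace over the first tensor factor. -/
def ptr1 {α β : Type*} [Fintype α] (M : Matrix (α × β) (α × β) ℂ) :
    Matrix β β ℂ := fun i j => ∑ k, M (k, i) (k, j)

/-- The rank-one projector `|x⟩⟨x|` onto the `x`-th standard basis vector. -/
def ex {n : ℕ} (x : Fin n) : Matrix (Fin n) (Fin n) ℂ :=
  Matrix.single x x 1

/-- A density matrix: positive semidefinite with unit trace. -/
def IsDensity {α : Type*} [Fintype α] [DecidableEq α] (A : Matrix α α ℂ) : Prop :=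
  A.PosSemidef ∧ A.trace = 1

/-- The Choi matrix of a linear map on matrices; the map is completely positive
iff its Choi matrix is positive semidefinite. -/
def choi {α β : Type*} [Fintype α] [DecidableEq α]
    (E : Matrix α α ℂ →ₗ[ℂ] Matrix β β ℂ) : Matrix (α × β) (α × β) ℂ :=
  fun p q => E (Matrix.single p.1 q.1 1) p.2 q.2

/-! Write the Choi matrix of `E` as a Gram matrix,
`choi E (a, b, k) (a', b', k') = ⟪v (a, b, k), v (a', b', k')⟫`, and collect the ancilla index
into `w a b = (v (a, b, k))ₖ`. The leak condition says exactly
`⟪w a b, w a' b'⟫ = δ_{ab} δ_{a'b'}`: so `w a b = 0` for `a ≠ b`, and all `w a a` are one and the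
same unit vector. Hence `E |a⟩⟨a'| = |a⟩⟨a'| ⊗ χ`, where `χ` is the Gram matrix of
`(v (c, c, k))ₖ` for any fixed `c`, i.e. a diagonal block of the Choi matrix; linearity does
the rest. -/

lemma Matrix.PosSemidef.exists_eq_star_dotProduct {𝕜 m : Type*} [RCLike 𝕜] [Fintype m]
    {A : Matrix m m 𝕜} (hA : A.PosSemidef) :
    ∃ v : m → m → 𝕜, ∀ i j, A i j = star (v i) ⬝ᵥ v j := by
  classical
  open scoped MatrixOrder Matrix.Norms.L2Operator in
  obtain ⟨B, rfl⟩ := CStarAlgebra.nonneg_iff_eq_star_mul_self.mp hA.nonneg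
  exact ⟨fun i r => B r i, fun i j => by simp [mul_apply, dotProduct]⟩

lemma Matrix.eq_of_star_dotProduct_eq_one {𝕜 ι : Type*} [RCLike 𝕜] [Fintype ι] {x y : ι → 𝕜}
    (hx : star x ⬝ᵥ x = 1) (hy : star y ⬝ᵥ y = 1) (hxy : star x ⬝ᵥ y = 1) : x = y := by
  have hyx : star y ⬝ᵥ x = 1 := by rw [star_dotProduct, hxy, star_one]
  rw [← sub_eq_zero, ← dotProduct_star_self_eq_zero]
  simp only [star_sub, sub_dotProduct, dotProduct_sub, hx, hy, hxy, hyx, sub_self]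

lemma Matrix.ext_linearMap_single_one {l m R M : Type*} [Finite l] [Finite m] [DecidableEq l]
    [DecidableEq m] [Semiring R] [AddCommMonoid M] [Module R M] {f g : Matrix l m R →ₗ[R] M}
    (h : ∀ i j, f (single i j 1) = g (single i j 1)) : f = g :=
  ext_linearMap R fun i j => LinearMap.ext_ring (h i j)

section Leak

variable {α β ι : Type*} [Fintype α] [DecidableEq α]
  {E : Matrix α α ℂ →ₗ[ℂ] Matrix (α × β) (α × β) ℂ}

def leakVector (v : α × α × β → ι → ℂ) (a b : α) : β × ι → ℂ :=
  fun p => v (a, b, p.1) p.2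

lemma star_dotProduct_leakVector [Fintype β] [Fintype ι] {v : α × α × β → ι → ℂ}
    (hv : ∀ p q, choi E p q = star (v p) ⬝ᵥ v q) (hLeak : ∀ A, ptr2 (E A) = A) (a a' b b' : α) :
    star (leakVector v a b) ⬝ᵥ leakVector v a' b' = single a a' 1 b b' := by
  rw [← hLeak (single a a' 1)]
  simp only [dotProduct, leakVector, Pi.star_apply, Fintype.sum_prod_type, ptr2]
  exact Finset.sum_congr rfl fun k _ => (hv (a, b, k) (a', b', k)).symm

lemma leakVector_eq_zero [Fintype β] [Fintype ι] {v : α × α × β → ι → ℂ}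
    (hv : ∀ p q, choi E p q = star (v p) ⬝ᵥ v q) (hLeak : ∀ A, ptr2 (E A) = A) {a b : α}
    (hab : a ≠ b) : leakVector v a b = 0 :=
  dotProduct_star_self_eq_zero.mp <| by simp [star_dotProduct_leakVector hv hLeak, hab]

lemma leakVector_self_eq [Fintype β] [Fintype ι] {v : α × α × β → ι → ℂ}
    (hv : ∀ p q, choi E p q = star (v p) ⬝ᵥ v q) (hLeak : ∀ A, ptr2 (E A) = A) (a c : α) :
    leakVector v a a = leakVector v c c := by
  have h := star_dotProduct_leakVector hv hLeak
  exact eq_of_star_dotProduct_eq_one (by simp [h]) (by simp [h]) (by simp [h])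

variable (E) in
def choiDiagBlock (c : α) : Matrix β β ℂ :=
  (choi E).submatrix (fun k => (c, c, k)) (fun k => (c, c, k))

lemma posSemidef_choiDiagBlock (hCP : (choi E).PosSemidef) (c : α) :
    (choiDiagBlock E c).PosSemidef :=
  hCP.submatrix _

lemma trace_choiDiagBlock [Fintype β] (hLeak : ∀ A, ptr2 (E A) = A) (c : α) :
    (choiDiagBlock E c).trace = 1 := by
  simpa [trace, ptr2, choiDiagBlock, choi] using congrFun (congrFun (hLeak (single c c 1)) c) c

lemma apply_single_eq_kronecker_choiDiagBlock [Fintype β] (hCP : (choi E).PosSemidef)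
    (hLeak : ∀ A, ptr2 (E A) = A) (c a a' : α) :
    E (single a a' 1) = single a a' 1 ⊗ₖ choiDiagBlock E c := by
  obtain ⟨v, hv⟩ := hCP.exists_eq_star_dotProduct
  have hoff {x y : α} (k : β) (hxy : x ≠ y) : v (x, y, k) = 0 :=
    funext fun r => congrFun (leakVector_eq_zero hv hLeak hxy) (k, r)
  have hdiag (x : α) (k : β) : v (x, x, k) = v (c, c, k) :=
    funext fun r => congrFun (leakVector_self_eq hv hLeak x c) (k, r)
  ext ⟨b, k⟩ ⟨b', k'⟩
  change choi E (a, b, k) (a', b', k') = _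
  rw [kronecker_apply, choiDiagBlock, submatrix_apply, hv, hv]
  by_cases hab : a = b
  · by_cases hab' : a' = b'
    · subst hab hab'
      simp [hdiag]
    · simp [hoff k' hab', hab']
  · simp [hoff k hab, hab]

lemma eq_kronecker_choiDiagBlock [Fintype β] (hCP : (choi E).PosSemidef)
    (hLeak : ∀ A, ptr2 (E A) = A) (c : α) (ρ : Matrix α α ℂ) : E ρ = ρ ⊗ₖ choiDiagBlock E c := by
  have : E = (kroneckerBilinear (R := ℂ)).flip (choiDiagBlock E c) :=
    ext_linearMap_single_one fun a a' => apply_single_eq_kronecker_choiDiagBlock hCP hLeak c a a'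
  exact LinearMap.congr_fun this ρ

end Leak

theorem stmt1_general (d n : ℕ) (hd : 2 ≤ d)
    (E : Matrix (Fin d) (Fin d) ℂ →ₗ[ℂ] Matrix (Fin d × Fin n) (Fin d × Fin n) ℂ)
    (hCP : (choi E).PosSemidef)
    (hLeak : ∀ A, ptr2 (E A) = A) :
    ∃ χ : Matrix (Fin n) (Fin n) ℂ, IsDensity χ ∧
      ∀ ρ, IsDensity ρ → E ρ = ρ ⊗ₖ χ := by
  obtain ⟨c⟩ : Nonempty (Fin d) := ⟨⟨0, by omega⟩⟩
  exact ⟨choiDiagBlock E c, ⟨posSemidef_choiDiagBlock hCP c, trace_choiDiagBlock hLeak c⟩,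
    fun ρ _ => eq_kronecker_choiDiagBlock hCP hLeak c ρ⟩

/-- for a full matrix algebra `M_d(ℂ)` with `d ≥ 2`, any quantum channel
(CP and trace-preserving) `E : M_d(ℂ) → M_d(ℂ) ⊗ M_n(ℂ)` with `Tr_C ∘ E = id` (a leak,
i.e. a non-disturbing measurement) factorizes as `E(ρ) = ρ ⊗ χ` for a fixed density
operator `χ` independent of `ρ`. -/
theorem stmt1 (d n : ℕ) (hd : 2 ≤ d)
    (E : Matrix (Fin d) (Fin d) ℂ →ₗ[ℂ] Matrix (Fin d × Fin n) (Fin d × Fin n) ℂ)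
    (hCP : (choi E).PosSemidef)
    (hTP : ∀ A, (E A).trace = A.trace)
    (hLeak : ∀ A, ptr2 (E A) = A) :
    ∃ χ : Matrix (Fin n) (Fin n) ℂ, IsDensity χ ∧
      ∀ ρ, IsDensity ρ → E ρ = ρ ⊗ₖ χ :=
  stmt1_general d n hd E hCP hLeak

end
end

section
/- Let R be an invertible channel on CQ(n,d) (classical-quantum states on ℂⁿ ⊗ ℂᵈ) whose inverse R⁻¹ is trace-preserving, and let s = ∑ₓ p(x)|x⟩⟨x| be a fixed classical state. Define E_s(ρ) = Tr_G[(R⁻¹ ⊗ id_C)(m(R(s ⊗ ρ)))], where m copies the classical register G into an ancilla C. Then Tr_C(E_s(ρ)) = ρ for all density matrices ρ on ℂᵈ; i.e., E_s is a non-disturbing measurement of the quantum system. -/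
/-!
Discarding the copy `C` at the end keeps only the diagonal blocks of the copied register, so
`Tr_C ∘ Tr_G ∘ (R⁻¹ ⊗ id_C) ∘ m` is `Tr_G ∘ R⁻¹` applied to the input with its coherences
between different values of `G` erased. A CQ state has no such coherences, so on
`R(s ⊗ ρ)` this gives `Tr_G (s ⊗ ρ) = (Tr s) ρ = ρ`.
-/

open Matrix Kronecker BigOperators
open scoped ComplexOrder

noncomputable section

/-- A classical-quantum state on `ℂⁿ ⊗ ℂᵈ`. -/
def IsCQState (n d : ℕ) (M : Matrix (Fin n × Fin d) (Fin n × Fin d) ℂ) : Prop :=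
  ∃ (p : Fin n → ℝ) (ρ : Fin n → Matrix (Fin d) (Fin d) ℂ),
    (∀ x, 0 ≤ p x) ∧ (∑ x, p x = 1) ∧ (∀ x, IsDensity (ρ x)) ∧
    M = ∑ x, (p x : ℂ) • (ex x ⊗ₖ ρ x)

/-- Extension `Φ ⊗ id_C` of a linear map `Φ` on the first tensor factor. -/
def extendC {α γ : Type*} (Φ : Matrix α α ℂ →ₗ[ℂ] Matrix α α ℂ)
    (M : Matrix (α × γ) (α × γ) ℂ) : Matrix (α × γ) (α × γ) ℂ :=
  fun p q => Φ (fun a a' => M (a, p.2) (a', q.2)) p.1 q.1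

/-- The copy map `m` copying the classical register `G` of a CQ state onto an ancilla `C`:
it sends `∑ₓ q(x)|x⟩⟨x|_G ⊗ σ(x)_S` to `∑ₓ q(x)|x⟩⟨x|_G ⊗ σ(x)_S ⊗ |x⟩⟨x|_C`. -/
def copyG {n : ℕ} {σ : Type*} (M : Matrix (Fin n × σ) (Fin n × σ) ℂ) :
    Matrix ((Fin n × σ) × Fin n) ((Fin n × σ) × Fin n) ℂ :=
  fun p q => if p.2 = p.1.1 ∧ q.2 = q.1.1 then M p.1 q.1 else 0

/-- The partial trace over the original classical register `G`. -/
def trG {n : ℕ} {σ : Type*}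
    (M : Matrix ((Fin n × σ) × Fin n) ((Fin n × σ) × Fin n) ℂ) :
    Matrix (σ × Fin n) (σ × Fin n) ℂ :=
  fun p q => ∑ g : Fin n, M ((g, p.1), p.2) ((g, q.1), q.2)

def dephase {ι σ : Type*} [DecidableEq ι] (M : Matrix (ι × σ) (ι × σ) ℂ) :
    Matrix (ι × σ) (ι × σ) ℂ :=
  fun a a' => if a.1 = a'.1 then M a a' else 0

lemma dephase_eq_self {ι σ : Type*} [DecidableEq ι] {M : Matrix (ι × σ) (ι × σ) ℂ}
    (hM : ∀ a a', a.1 ≠ a'.1 → M a a' = 0) : dephase M = M := by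
  funext a a'
  by_cases h : a.1 = a'.1
  · simp [dephase, h]
  · simp [dephase, h, hM a a' h]

lemma IsCQState.apply_eq_zero {n d : ℕ} {M : Matrix (Fin n × Fin d) (Fin n × Fin d) ℂ}
    (hM : IsCQState n d M) (a a' : Fin n × Fin d) (h : a.1 ≠ a'.1) : M a a' = 0 := by
  obtain ⟨p, ρ, -, -, -, rfl⟩ := hM
  simp only [Matrix.sum_apply, Matrix.smul_apply, kroneckerMap_apply, ex, Matrix.single,
    Matrix.of_apply]
  refine Finset.sum_eq_zero fun x _ => ?_
  rw [if_neg fun hx : x = a.1 ∧ x = a'.1 => h (hx.1 ▸ hx.2), zero_mul, smul_zero]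

lemma dephase_eq_self_of_isCQState {n d : ℕ} {M : Matrix (Fin n × Fin d) (Fin n × Fin d) ℂ}
    (hM : IsCQState n d M) : dephase M = M :=
  dephase_eq_self hM.apply_eq_zero

/-- The `(c, c)` block of `copyG M` in the copied register. -/
def classicalBlock {ι σ : Type*} [DecidableEq ι] (c : ι) (M : Matrix (ι × σ) (ι × σ) ℂ) :
    Matrix (ι × σ) (ι × σ) ℂ :=
  fun a a' => if c = a.1 ∧ c = a'.1 then M a a' else 0

lemma sum_classicalBlock {ι σ : Type*} [Fintype ι] [DecidableEq ι]
    (M : Matrix (ι × σ) (ι × σ) ℂ) : ∑ c, classicalBlock c M = dephase M := by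
  funext a a'
  rw [Matrix.sum_apply]
  by_cases h : a.1 = a'.1
  · simp [classicalBlock, dephase, h]
  · simp [classicalBlock, dephase, h, show ∀ c : ι, ¬(c = a.1 ∧ c = a'.1) by grind]

lemma ptr2_trG_extendC_copyG {n : ℕ} {σ : Type*}
    (Φ : Matrix (Fin n × σ) (Fin n × σ) ℂ →ₗ[ℂ] Matrix (Fin n × σ) (Fin n × σ) ℂ)
    (M : Matrix (Fin n × σ) (Fin n × σ) ℂ) :
    ptr2 (trG (extendC Φ (copyG M))) = ptr1 (Φ (dephase M)) := by
  funext i j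
  change ∑ c, ∑ g, Φ (classicalBlock c M) (g, i) (g, j) = ∑ g, Φ (dephase M) (g, i) (g, j)
  rw [← sum_classicalBlock, map_sum]
  simp only [Matrix.sum_apply]
  exact Finset.sum_comm

lemma ptr1_kronecker {α β : Type*} [Fintype α] (A : Matrix α α ℂ) (B : Matrix β β ℂ) :
    ptr1 (A ⊗ₖ B) = A.trace • B := by
  funext i j
  simp [ptr1, kroneckerMap_apply, Matrix.trace, Finset.sum_mul]

lemma trace_classicalState {n : ℕ} {p : Fin n → ℝ} (hp1 : ∑ x, p x = 1) :
    (∑ x, (p x : ℂ) • ex x).trace = 1 := by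
  simp [Matrix.trace_sum, ex, Matrix.trace_single_eq_same, ← Complex.ofReal_sum, hp1]

lemma isCQState_classicalState_kronecker {n d : ℕ} {p : Fin n → ℝ} (hp0 : ∀ x, 0 ≤ p x)
    (hp1 : ∑ x, p x = 1) {ρ : Matrix (Fin d) (Fin d) ℂ} (hρ : IsDensity ρ) :
    IsCQState n d ((∑ x, (p x : ℂ) • ex x) ⊗ₖ ρ) := by
  refine ⟨p, fun _ => ρ, hp0, hp1, fun _ => hρ, ?_⟩
  funext a a'
  simp [Matrix.sum_apply, kroneckerMap_apply, Finset.sum_mul, mul_assoc]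

theorem stmt4_general (n d : ℕ)
    (R Rinv : Matrix (Fin n × Fin d) (Fin n × Fin d) ℂ →ₗ[ℂ]
      Matrix (Fin n × Fin d) (Fin n × Fin d) ℂ)
    (hInv : ∀ M, Rinv (R M) = M)
    (hCQ : ∀ M, IsCQState n d M → IsCQState n d (R M))
    (p : Fin n → ℝ) (hp0 : ∀ x, 0 ≤ p x) (hp1 : ∑ x, p x = 1) :
    ∀ ρ : Matrix (Fin d) (Fin d) ℂ, IsDensity ρ →
      ptr2 (trG (extendC Rinv (copyG (R ((∑ x, (p x : ℂ) • ex x) ⊗ₖ ρ))))) = ρ := by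
  intro ρ hρ
  have hR : IsCQState n d (R ((∑ x, (p x : ℂ) • ex x) ⊗ₖ ρ)) :=
    hCQ _ (isCQState_classicalState_kronecker hp0 hp1 hρ)
  rw [ptr2_trG_extendC_copyG, dephase_eq_self_of_isCQState hR, hInv, ptr1_kronecker,
    trace_classicalState hp1, one_smul]

/-- for an invertible channel `R` on CQ states with trace-preserving inverse
and a fixed classical state `s`, the map `E_s(ρ) = Tr_G[(R⁻¹ ⊗ id_C)(m(R(s ⊗ ρ)))]` is
non-disturbing: `Tr_C(E_s(ρ)) = ρ` for all density matrices `ρ`. -/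
theorem stmt4 (n d : ℕ)
    (R Rinv : Matrix (Fin n × Fin d) (Fin n × Fin d) ℂ →ₗ[ℂ]
      Matrix (Fin n × Fin d) (Fin n × Fin d) ℂ)
    (hTP : ∀ M, (Rinv M).trace = M.trace)
    (hInv : ∀ M, Rinv (R M) = M)
    (hCQ : ∀ M, IsCQState n d M → IsCQState n d (R M))
    (p : Fin n → ℝ) (hp0 : ∀ x, 0 ≤ p x) (hp1 : ∑ x, p x = 1) :
    ∀ ρ : Matrix (Fin d) (Fin d) ℂ, IsDensity ρ →
      ptr2 (trG (extendC Rinv (copyG (R ((∑ x, (p x : ℂ) • ex x) ⊗ₖ ρ))))) = ρ :=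
  stmt4_general n d R Rinv hInv hCQ p hp0 hp1

end
end

section
/- No perfect non-disturbing discrimination of non-orthogonal pure states: if E : M_d(ℂ) → M_d(ℂ) ⊗ D_m is a channel with Tr_C ∘ E = id, and |ψ⟩, |φ⟩ are pure states with 0 < |⟨ψ|φ⟩| < 1, then the pointer marginals Tr_S(E(|ψ⟩⟨ψ|)) and Tr_S(E(|φ⟩⟨φ|)) are equal. -/
open Matrix Kronecker BigOperators
open scoped ComplexOrder

noncomputable section

/-!
Cut the output of `E` into its pointer blocks `E_k(A) = blockDiag (E A) k`. Complete positivity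
makes every `E_k(x x*)` positive, and since the blocks add up to `x x*` (nothing leaks), each of
them is dominated by the rank-one projector `x x*` and therefore equals `c_k(x) • x x*`. Because
`E_k` is linear, comparing `ψ ψ*`, `φ φ*`, `(ψ + φ)(ψ + φ)*` and `(ψ + 2φ)(ψ + 2φ)*` shows
`c_k(ψ) = c_k(φ)` as soon as `ψ` and `φ` are linearly independent, which `|⟨ψ|φ⟩| < 1` guarantees.
For a unit vector the pointer marginal is `diagonal c_k`, so it is the same for `ψ` and `φ`.
-/

namespace Matrix

section RCLike

open scoped MatrixOrder

variable {n r 𝕜 : Type*} [RCLike 𝕜]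

theorem vecMulVec_mulVec_star [Fintype r] (V : Matrix n r 𝕜) (a : r → 𝕜) :
    vecMulVec (V *ᵥ a) (star (V *ᵥ a)) = V * vecMulVec a (star a) * Vᴴ := by
  rw [mul_vecMulVec, vecMulVec_mul, star_mulVec]

variable [Fintype n]

/-- `P` vanishes on the orthogonal complement of `x`, so `P (x x*) = |x|² P` and
`(x x*) P = |x|² P`; sandwiching `P` between two copies of `x x*` exhibits it as a multiple
of `x x*`. -/
theorem exists_eq_smul_vecMulVec_of_le {P : Matrix n n 𝕜} {x : n → 𝕜} (hP : 0 ≤ P)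
    (hPx : P ≤ vecMulVec x (star x)) : ∃ c : 𝕜, P = c • vecMulVec x (star x) := by
  rcases eq_or_ne x 0 with rfl | hx
  · exact ⟨0, by simpa using le_antisymm (by simpa using hPx) hP⟩
  set n₀ := star x ⬝ᵥ x
  have hker (v : n → 𝕜) (hv : star x ⬝ᵥ v = 0) : P *ᵥ v = 0 := by
    refine (hP.posSemidef.dotProduct_mulVec_zero_iff v).1 (le_antisymm ?_
      (hP.posSemidef.dotProduct_mulVec_nonneg v))
    have := (le_iff.1 hPx).dotProduct_mulVec_nonneg v
    rwa [sub_mulVec, dotProduct_sub, vecMulVec_mulVec, hv, MulOpposite.op_zero, zero_smul,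
      dotProduct_zero, zero_sub, neg_nonneg] at this
  have hright : P * vecMulVec x (star x) = n₀ • P := by
    refine ext_iff_mulVec.2 fun v => ?_
    have := hker ((star x ⬝ᵥ v) • x - n₀ • v) (by
      rw [dotProduct_sub, dotProduct_smul, dotProduct_smul, smul_eq_mul, smul_eq_mul, mul_comm,
        sub_self])
    rw [mulVec_sub, mulVec_smul, mulVec_smul, sub_eq_zero] at this
    rw [← mulVec_mulVec, vecMulVec_mulVec, op_smul_eq_smul, mulVec_smul, smul_mulVec, this]
  have hleft : vecMulVec x (star x) * P = star n₀ • P := by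
    simpa [hP.posSemidef.isHermitian.eq] using congrArg conjTranspose hright
  have hsandwich : vecMulVec x (star x) * P * vecMulVec x (star x)
      = (star x ⬝ᵥ P *ᵥ x) • vecMulVec x (star x) := by
    rw [Matrix.mul_assoc, mul_vecMulVec, vecMulVec_mul_vecMulVec, vecMulVec_smul]
  have hn₀ : star n₀ * n₀ ≠ 0 := by simp [n₀, hx]
  refine ⟨(star n₀ * n₀)⁻¹ * (star x ⬝ᵥ P *ᵥ x), ?_⟩
  rw [mul_smul, ← hsandwich, hleft, Matrix.smul_mul, hright, smul_smul, smul_smul,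
    mul_assoc, inv_mul_cancel₀ hn₀, one_smul]

theorem eq_of_mul_mul_conjTranspose_eq [Fintype r] [DecidableEq r] {V : Matrix n r 𝕜}
    (hV : IsUnit (Vᴴ * V).det) {A B : Matrix r r 𝕜} (h : V * A * Vᴴ = V * B * Vᴴ) : A = B := by
  have hG : IsUnit (Vᴴ * V) := (isUnit_iff_isUnit_det _).2 hV
  have : Vᴴ * V * A * (Vᴴ * V) = Vᴴ * V * B * (Vᴴ * V) := by
    simpa only [Matrix.mul_assoc] using congrArg (fun M => Vᴴ * M * V) h
  exact hG.mul_left_cancel (hG.mul_right_cancel this)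

theorem gram_det_ne_zero_of_norm_lt_one {ψ φ : n → 𝕜} (hψ : star ψ ⬝ᵥ ψ = 1)
    (hφ : star φ ⬝ᵥ φ = 1) (hψφ : ‖star ψ ⬝ᵥ φ‖ < 1) :
    (star ψ ⬝ᵥ ψ) * (star φ ⬝ᵥ φ) - (star ψ ⬝ᵥ φ) * (star φ ⬝ᵥ ψ) ≠ 0 := by
  have hnorm : (star ψ ⬝ᵥ φ) * (star φ ⬝ᵥ ψ) = ((‖star ψ ⬝ᵥ φ‖ ^ 2 : ℝ) : 𝕜) := by
    rw [star_dotProduct φ ψ, RCLike.star_def, RCLike.mul_conj, RCLike.ofReal_pow]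
  rw [hψ, hφ, hnorm, one_mul]
  have : (1 - ‖star ψ ⬝ᵥ φ‖ ^ 2 : ℝ) ≠ 0 := by nlinarith [norm_nonneg (star ψ ⬝ᵥ φ)]
  exact_mod_cast this

theorem exists_smul_of_forall_map_vecMulVec (F : Matrix n n 𝕜 →ₗ[𝕜] Matrix n n 𝕜)
    (hF : ∀ x, ∃ c : 𝕜, F (vecMulVec x (star x)) = c • vecMulVec x (star x)) {ψ φ : n → 𝕜}
    (hψφ : (star ψ ⬝ᵥ ψ) * (star φ ⬝ᵥ φ) - (star ψ ⬝ᵥ φ) * (star φ ⬝ᵥ ψ) ≠ 0) :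
    ∃ c : 𝕜, F (vecMulVec ψ (star ψ)) = c • vecMulVec ψ (star ψ) ∧
      F (vecMulVec φ (star φ)) = c • vecMulVec φ (star φ) := by
  choose c hc using hF
  set V : Matrix n (Fin 2) 𝕜 := (of ![ψ, φ])ᵀ
  have hV : IsUnit (Vᴴ * V).det := by
    rw [isUnit_iff_ne_zero, det_fin_two]
    simpa [V, mul_apply, dotProduct] using hψφ
  have hVψ : V *ᵥ ![1, 0] = ψ := by ext; simp [V, mulVec, dotProduct]
  have hVφ : V *ᵥ ![0, 1] = φ := by ext; simp [V, mulVec, dotProduct]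
  set Q : (Fin 2 → 𝕜) → Matrix (Fin 2) (Fin 2) 𝕜 := fun a => vecMulVec a (star a)
  have hFV (a : Fin 2 → 𝕜) : F (V * Q a * Vᴴ) = V * (c (V *ᵥ a) • Q a) * Vᴴ := by
    rw [← vecMulVec_mulVec_star, hc, vecMulVec_mulVec_star, Matrix.mul_smul, Matrix.smul_mul]
  -- the vectors `ψ + t φ` at `t = 2, 1, 0, ∞`, combined so that the cross terms cancel
  have hrel : Q ![1, 2] - (2 : 𝕜) • Q ![1, 1] + Q ![1, 0] - (2 : 𝕜) • Q ![0, 1] = 0 := by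
    ext i j
    fin_cases i <;> fin_cases j <;>
      simp only [Q, sub_apply, add_apply, smul_apply, vecMulVec_apply, Pi.star_apply] <;>
      simp <;> norm_num
  have hzero := eq_of_mul_mul_conjTranspose_eq hV (B := 0) <| calc
    V * (c (V *ᵥ ![1, 2]) • Q ![1, 2] - (2 : 𝕜) • c (V *ᵥ ![1, 1]) • Q ![1, 1]
        + c (V *ᵥ ![1, 0]) • Q ![1, 0] - (2 : 𝕜) • c (V *ᵥ ![0, 1]) • Q ![0, 1]) * Vᴴ
        = F (V * (Q ![1, 2] - (2 : 𝕜) • Q ![1, 1] + Q ![1, 0] - (2 : 𝕜) • Q ![0, 1]) * Vᴴ) := by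
      simp only [Matrix.mul_sub, Matrix.mul_add, Matrix.sub_mul, Matrix.add_mul,
        Matrix.mul_smul, Matrix.smul_mul, map_sub, map_add, map_smul, hFV]
    _ = V * (0 : Matrix (Fin 2) (Fin 2) 𝕜) * Vᴴ := by rw [hrel]; simp
  have e₀₀ := congrFun (congrFun hzero 0) 0
  have e₀₁ := congrFun (congrFun hzero 0) 1
  have e₁₁ := congrFun (congrFun hzero 1) 1
  simp only [Q, sub_apply, add_apply, smul_apply, vecMulVec_apply, Pi.star_apply, zero_apply,
    hVψ, hVφ] at e₀₀ e₀₁ e₁₁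
  simp at e₀₀ e₀₁ e₁₁
  norm_num at e₀₀ e₀₁ e₁₁
  refine ⟨c ψ, hc ψ, ?_⟩
  rw [hc φ]
  congr 1
  linear_combination (3 / 2 : 𝕜) * e₀₁ - e₀₀ - e₁₁ / 2

end RCLike

def blockDiagLinearMap {m n o R : Type*} [Semiring R] (k : o) :
    Matrix (m × o) (n × o) R →ₗ[R] Matrix m n R where
  toFun M := blockDiag M k
  map_add' M N := by rw [blockDiag_add]; rfl
  map_smul' c M := by rw [blockDiag_smul]; rfl

end Matrix

section Channel

variable {α β : Type*}

theorem map_apply_eq_sum_choi [Fintype α] [DecidableEq α] (E : Matrix α α ℂ →ₗ[ℂ] Matrix β β ℂ) (A : Matrix α α ℂ)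
    (p q : β) : E A p q = ∑ a, ∑ b, A a b * choi E (a, p) (b, q) := by
  conv_lhs => rw [matrix_eq_sum_single A]
  simp only [map_sum, Matrix.sum_apply]
  refine Finset.sum_congr rfl fun a _ => Finset.sum_congr rfl fun b _ => ?_
  rw [show single a b (A a b) = A a b • single a b 1 by rw [smul_single, smul_eq_mul, mul_one],
    _root_.map_smul, Matrix.smul_apply, smul_eq_mul]
  rfl

theorem posSemidef_map_vecMulVec_of_posSemidef_choi [Fintype α] [DecidableEq α] [Fintype β] [DecidableEq β]
    {E : Matrix α α ℂ →ₗ[ℂ] Matrix β β ℂ} (hCP : (choi E).PosSemidef) (x : α → ℂ) :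
    (E (vecMulVec x (star x))).PosSemidef := by
  -- `E (x x*) = Yᴴ (choi E) Y` with `Y = x̄ ⊗ 1`
  set Y : Matrix (α × β) β ℂ := of fun p q => if p.2 = q then star (x p.1) else 0
  convert hCP.conjTranspose_mul_mul_same Y using 1
  ext p q
  rw [map_apply_eq_sum_choi]
  simp only [Y, mul_apply, conjTranspose_apply, of_apply, Fintype.sum_prod_type, apply_ite star,
    star_star, star_zero, ite_mul, zero_mul, Finset.sum_mul, mul_ite, mul_zero,
    Finset.sum_ite_eq', Finset.mem_univ, if_true, vecMulVec_apply, Pi.star_apply]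
  rw [Finset.sum_comm]
  refine Finset.sum_congr rfl fun a _ => Finset.sum_congr rfl fun b _ => ?_
  ring

theorem ptr2_eq_sum_blockDiag [Fintype β] (M : Matrix (α × β) (α × β) ℂ) :
    ptr2 M = ∑ k, blockDiag M k := by
  ext i j
  simp [ptr2, Matrix.sum_apply, blockDiag_apply]

theorem ptr1_eq_diagonal_trace_blockDiag [Fintype α] [DecidableEq β] (M : Matrix (α × β) (α × β) ℂ)
    (hM : ∀ p q : α × β, p.2 ≠ q.2 → M p q = 0) :
    ptr1 M = diagonal fun k => trace (blockDiag M k) := by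
  ext k k'
  rcases eq_or_ne k k' with rfl | hkk'
  · simp [ptr1, trace, blockDiag_apply]
  · simp [ptr1, hkk', hM (_, k) (_, k') hkk']

open scoped MatrixOrder in
theorem exists_blockDiag_map_vecMulVec_eq_smul [Fintype α] [DecidableEq α] [Fintype β] [DecidableEq β]
    {E : Matrix α α ℂ →ₗ[ℂ] Matrix (α × β) (α × β) ℂ} (hCP : (choi E).PosSemidef)
    (hLeak : ∀ A, ptr2 (E A) = A) (x : α → ℂ) (k : β) :
    ∃ c : ℂ, blockDiag (E (vecMulVec x (star x))) k = c • vecMulVec x (star x) := by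
  have hblock (k' : β) : 0 ≤ blockDiag (E (vecMulVec x (star x))) k' :=
    ((posSemidef_map_vecMulVec_of_posSemidef_choi hCP x).submatrix (·, k')).nonneg
  refine exists_eq_smul_vecMulVec_of_le (hblock k) ?_
  calc blockDiag (E (vecMulVec x (star x))) k
      ≤ ∑ k', blockDiag (E (vecMulVec x (star x))) k' :=
        Finset.single_le_sum (fun k' _ => hblock k') (Finset.mem_univ k)
    _ = vecMulVec x (star x) := by rw [← ptr2_eq_sum_blockDiag, hLeak]

end Channel

theorem stmt14_general (d m : ℕ)
    (E : Matrix (Fin d) (Fin d) ℂ →ₗ[ℂ] Matrix (Fin d × Fin m) (Fin d × Fin m) ℂ)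
    (hCP : (choi E).PosSemidef)
    (hDiag : ∀ A (p q : Fin d × Fin m), p.2 ≠ q.2 → E A p q = 0)
    (hLeak : ∀ A, ptr2 (E A) = A)
    (ψ φ : Fin d → ℂ)
    (hψ : ∑ i, star (ψ i) * ψ i = 1) (hφ : ∑ i, star (φ i) * φ i = 1)
    (hover₂ : ‖∑ i, star (ψ i) * φ i‖ < 1) :
    ptr1 (E (Matrix.vecMulVec ψ (star ψ))) = ptr1 (E (Matrix.vecMulVec φ (star φ))) := by
  have hψ : star ψ ⬝ᵥ ψ = 1 := hψ
  have hφ : star φ ⬝ᵥ φ = 1 := hφ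
  rw [ptr1_eq_diagonal_trace_blockDiag _ (hDiag _), ptr1_eq_diagonal_trace_blockDiag _ (hDiag _)]
  congr 1
  funext k
  obtain ⟨c, hcψ, hcφ⟩ := exists_smul_of_forall_map_vecMulVec (blockDiagLinearMap k ∘ₗ E)
    (exists_blockDiag_map_vecMulVec_eq_smul hCP hLeak · k)
    (gram_det_ne_zero_of_norm_lt_one hψ hφ hover₂)
  change blockDiag (E _) k = _ at hcψ hcφ
  rw [hcψ, hcφ, trace_smul, trace_smul, trace_vecMulVec, trace_vecMulVec, dotProduct_comm, hψ,
    dotProduct_comm, hφ]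

/-- no perfect non-disturbing discrimination of non-orthogonal pure states:
if `E : M_d(ℂ) → M_d(ℂ) ⊗ D_m` is a channel with `Tr_C ∘ E = id` and `|ψ⟩, |φ⟩` are
normalized pure states with `0 < |⟨ψ|φ⟩| < 1`, then the pointer marginals of `E(|ψ⟩⟨ψ|)`
and `E(|φ⟩⟨φ|)` are equal. -/
theorem stmt14 (d m : ℕ)
    (E : Matrix (Fin d) (Fin d) ℂ →ₗ[ℂ] Matrix (Fin d × Fin m) (Fin d × Fin m) ℂ)
    (hCP : (choi E).PosSemidef)
    (hTP : ∀ A, (E A).trace = A.trace)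
    (hDiag : ∀ A (p q : Fin d × Fin m), p.2 ≠ q.2 → E A p q = 0)
    (hLeak : ∀ A, ptr2 (E A) = A)
    (ψ φ : Fin d → ℂ)
    (hψ : ∑ i, star (ψ i) * ψ i = 1) (hφ : ∑ i, star (φ i) * φ i = 1)
    (hover₁ : 0 < ‖∑ i, star (ψ i) * φ i‖) (hover₂ : ‖∑ i, star (ψ i) * φ i‖ < 1) :
    ptr1 (E (Matrix.vecMulVec ψ (star ψ))) = ptr1 (E (Matrix.vecMulVec φ (star φ))) :=
  stmt14_general d m E hCP hDiag hLeak ψ φ hψ hφ hover₂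

end
end
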